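/- Let K be a field of characteristic p > 0 with K/k finitely generated, k = ⋂_n K^{p^n}. Let W ⊆ K be any subfield and W_n := W · K^{p^n} its power tower. Then the field of first integrals W_∞ := ⋂_{n≥0} W_n equals the separable closure of k·W in K. In particular, W ↦ ⋂_n (W · K^{p^n}) is the identity on subfields W with k ⊆ W ⊆ K that are separably closed in K. -/

import Mathlib

/-!
Put `V = k · W`; since `k ⊆ K^{p^n}`, the fields `W · K^{p^n}` and `V · K^{p^n}` coincide, and
`K/V` is finitely generated. A separable `x` lies in `V(x^{p^n}) ⊆ V · K^{p^n}` for every `n`.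

Conversely let `x ∈ V · K^{p^n}` for all `n`. The core fact is that such an `x` with `x^p ∈ V`
already lies in `V`. If `K/V` is finite, `K` is purely inseparable of some exponent `e` over the
separable closure of `V`, so `V · K^{p^e}` is separable over `V`, and a separable `x` with
`x^p ∈ V` lies in `V(x^p) = V`. Otherwise adjoin a transcendental generator `t` and induct on
the number of generators: `V` is closed under `p`-th roots inside `V(t)`.
Over `V(x^p)` the core fact gives `V(x) = V(x^p)`, so `x` is algebraic and some `x^{p^m}` is
separable over `V`; over the separable closure of `V` it then descends from `x^{p^m}` to `x`.
-/

/-- The subfield `K^{p^n}` of `p^n`-th powers of `K`. -/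
noncomputable def pfield (K : Type*) [Field K] (p : ℕ) [hp : Fact p.Prime] [CharP K p]
    (n : ℕ) : Subfield K :=
  haveI : ExpChar K p := .prime hp.out
  (iterateFrobenius K p n).fieldRange

/-- The subfield `k = ⋂_{n ≥ 0} K^{p^n}`. -/
noncomputable def kfield (K : Type*) [Field K] (p : ℕ) [Fact p.Prime] [CharP K p] : Subfield K :=
  ⨅ n : ℕ, pfield K p n

/-- A power tower on `K`: a sequence of subfields with `W j = W i · K^{p^j}` for `j ≤ i`. -/
def IsPowerTower (K : Type*) [Field K] (p : ℕ) [Fact p.Prime] [CharP K p]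
    (W : ℕ → Subfield K) : Prop :=
  ∀ ⦃i j : ℕ⦄, j ≤ i → W j = W i ⊔ pfield K p j

/-- The degree `[A : B]` for subfields `B ≤ A` of `K` (computed as `[B ⊔ A : B]`). -/
noncomputable def relrank {K : Type*} [Field K] (B A : Subfield K) : ℕ :=
  letI := (Subfield.inclusion (le_sup_left : B ≤ B ⊔ A)).toAlgebra
  Module.finrank ↥B ↥(B ⊔ A)

/-- Finiteness of the degree `[A : B]` (as `[B ⊔ A : B]`). -/
def finRel {K : Type*} [Field K] (B A : Subfield K) : Prop :=
  letI := (Subfield.inclusion (le_sup_left : B ≤ B ⊔ A)).toAlgebra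
  FiniteDimensional ↥B ↥(B ⊔ A)

/-- The separable closure of a subfield `W` inside `K`, as a subfield of `K`. -/
noncomputable def sepCl {K : Type*} [Field K] (W : Subfield K) : Subfield K :=
  (separableClosure ↥W K).toSubfield

open Polynomial IntermediateField

section

variable {K : Type*} [Field K]

lemma toSubfield_adjoin_eq_sup_closure (L : Subfield K) (S : Set K) :
    (adjoin L S).toSubfield = L ⊔ Subfield.closure S := by
  have hL : Set.range (algebraMap L K) = L := Subtype.range_coe
  rw [adjoin_toSubfield, Subfield.closure_union, hL, Subfield.closure_eq]

lemma IntermediateField.le_toSubfield {L : Subfield K} (E : IntermediateField L K) :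
    L ≤ E.toSubfield :=
  fun x hx => E.algebraMap_mem ⟨x, hx⟩

lemma mem_sepCl_iff {L : Subfield K} {x : K} : x ∈ sepCl L ↔ IsSeparable L x :=
  mem_separableClosure_iff

lemma finiteDimensional_of_sup_closure_eq_top {L : Subfield K} {s : Finset K}
    (hs : L ⊔ Subfield.closure s = ⊤) (hint : ∀ a ∈ s, IsIntegral L a) :
    FiniteDimensional L K := by
  have hadj : adjoin L (s : Set K) = ⊤ :=
    toSubfield_injective (by rw [toSubfield_adjoin_eq_sup_closure, hs]; rfl)
  have := finiteDimensional_adjoin hint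
  rw [hadj] at this
  exact topEquiv.toLinearEquiv.finiteDimensional

lemma IsAlgebraic.exists_isSeparable_pow_pow {F E : Type*} [Field F] [Field E] [Algebra F E]
    (p : ℕ) [Fact p.Prime] [CharP F p] {x : E} (hx : IsAlgebraic F x) :
    ∃ m, IsSeparable F (x ^ p ^ m) := by
  obtain ⟨m, g, hg, hgx⟩ := exists_separable_of_irreducible p (minpoly.irreducible hx.isIntegral)
    (Fact.out : p.Prime).ne_zero
  refine ⟨m, hg.of_dvd (minpoly.dvd _ _ ?_)⟩
  rw [← expand_aeval, hgx, minpoly.aeval]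

end

section

variable {K : Type*} [Field K] {p : ℕ} [Fact p.Prime] [CharP K p]

lemma mem_pfield_iff {n : ℕ} {x : K} : x ∈ pfield K p n ↔ ∃ y : K, y ^ p ^ n = x := by
  simp only [pfield, RingHom.mem_fieldRange, iterateFrobenius_def]

lemma pow_mem_pfield (n : ℕ) (y : K) : y ^ p ^ n ∈ pfield K p n :=
  mem_pfield_iff.2 ⟨y, rfl⟩

lemma kfield_le_pfield (n : ℕ) : kfield K p ≤ pfield K p n :=
  iInf_le _ n

lemma mem_of_isSeparable_of_pow_mem {L : Subfield K} {x : K} (hx : IsSeparable L x)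
    (hxp : x ^ p ∈ L) : x ∈ L := by
  have h := adjoin_simple_eq_adjoin_pow_expChar_of_isSeparable L K hx p
  have hbot : L⟮x ^ p⟯ = ⊥ := adjoin_simple_eq_bot_iff.2 (mem_bot.2 ⟨⟨_, hxp⟩, rfl⟩)
  rw [hbot] at h
  obtain ⟨y, hy⟩ := h ▸ mem_adjoin_simple_self L x
  exact hy ▸ y.2

lemma mem_of_pow_mem_of_mem_adjoin_transcendental {L : Subfield K} {t y : K}
    (ht : Transcendental L t) (hy : y ∈ L⟮t⟯) (hyp : y ^ p ∈ L) : y ∈ L := by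
  obtain ⟨r, s, rfl⟩ := (mem_adjoin_simple_iff _ _).1 hy
  by_cases hs : aeval t s = 0
  · simp [hs]
  set c : L := ⟨_, hyp⟩
  have hrs : r ^ p = C c * s ^ p := by
    apply transcendental_iff_injective.1 ht
    simp only [map_pow, map_mul, aeval_C]
    change _ = (aeval t r / aeval t s) ^ p * _
    rw [div_pow, div_mul_cancel₀ _ (pow_ne_zero _ hs)]
  have hs0 : s ≠ 0 := by rintro rfl; simp at hs
  -- comparing leading coefficients in `r ^ p = c * s ^ p` shows that `c` is a `p`-th power in `L`
  obtain ⟨u, hu⟩ : ∃ u : L, u ^ p = c := ⟨r.leadingCoeff / s.leadingCoeff, by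
    have := congrArg leadingCoeff hrs
    rw [leadingCoeff_pow, leadingCoeff_mul, leadingCoeff_C, leadingCoeff_pow] at this
    rw [div_pow, this, mul_div_cancel_right₀ _ (pow_ne_zero _ (leadingCoeff_ne_zero.2 hs0))]⟩
  have : (u : K) = aeval t r / aeval t s :=
    frobenius_inj K p (show (u : K) ^ p = (aeval t r / aeval t s) ^ p by
      rw [← SubmonoidClass.coe_pow, hu])
  exact this ▸ u.2

lemma exists_pfield_le_sepCl (L : Subfield K) [FiniteDimensional L K] :
    ∃ e, pfield K p e ≤ sepCl L := by
  obtain ⟨e, he⟩ := (IsPurelyInseparable.hasExponent_iff' (separableClosure L K) K p).1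
    inferInstance
  refine ⟨e, fun z hz => ?_⟩
  obtain ⟨y, rfl⟩ := mem_pfield_iff.1 hz
  obtain ⟨a, ha⟩ := he y
  exact ha ▸ a.2

lemma mem_of_pow_mem_of_forall_mem_sup_pfield (s : Finset K) {L : Subfield K}
    (hs : L ⊔ Subfield.closure s = ⊤) {x : K} (hxp : x ^ p ∈ L)
    (hx : ∀ n, x ∈ L ⊔ pfield K p n) : x ∈ L := by
  classical
  induction s using Finset.strongInduction generalizing L with
  | H s ih =>
  by_cases hint : ∀ a ∈ s, IsIntegral L a
  · have := finiteDimensional_of_sup_closure_eq_top hs hint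
    obtain ⟨e, he⟩ := exists_pfield_le_sepCl (p := p) L
    exact mem_of_isSeparable_of_pow_mem
      (mem_sepCl_iff.1 (sup_le (IntermediateField.le_toSubfield _) he (hx e))) hxp
  push Not at hint
  obtain ⟨t, hts, ht⟩ := hint
  have hL := IntermediateField.le_toSubfield L⟮t⟯
  refine mem_of_pow_mem_of_mem_adjoin_transcendental (fun h => ht h.isIntegral) ?_ hxp
  refine ih _ (Finset.erase_ssubset hts) (L := L⟮t⟯.toSubfield) ?_ (hL hxp)
    fun n => sup_le_sup_right hL _ (hx n)
  rw [← hs, toSubfield_adjoin_eq_sup_closure, sup_assoc, ← Subfield.closure_union,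
    ← Set.insert_eq, ← Finset.coe_insert, Finset.insert_erase hts]

lemma mem_of_pow_pow_mem_of_forall_mem_sup_pfield (s : Finset K) {L : Subfield K}
    (hs : L ⊔ Subfield.closure s = ⊤) {x : K} (m : ℕ) (hxp : x ^ p ^ m ∈ L)
    (hx : ∀ n, x ∈ L ⊔ pfield K p n) : x ∈ L := by
  induction m generalizing x with
  | zero => simpa using hxp
  | succ m ih =>
    refine mem_of_pow_mem_of_forall_mem_sup_pfield s hs (ih ?_ fun n => pow_mem (hx n) p) hx
    rwa [← pow_mul, ← pow_succ']

lemma isAlgebraic_of_forall_mem_sup_pfield (s : Finset K) {L : Subfield K}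
    (hs : L ⊔ Subfield.closure s = ⊤) {x : K} (hx : ∀ n, x ∈ L ⊔ pfield K p n) :
    IsAlgebraic L x := by
  have hL := IntermediateField.le_toSubfield L⟮x ^ p⟯
  have hmem : x ∈ L⟮x ^ p⟯ :=
    mem_of_pow_mem_of_forall_mem_sup_pfield s (top_unique (hs ▸ sup_le_sup_right hL _))
      (mem_adjoin_simple_self _ _) fun n => sup_le_sup_right hL _ (hx n)
  refine Field.isAlgebraic_of_adjoin_eq_adjoin L K (m := 1) (n := p)
    (Fact.out : p.Prime).one_lt.ne ?_
  rw [pow_one]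
  exact le_antisymm (adjoin_simple_le_iff.2 hmem)
    (adjoin_simple_le_iff.2 (pow_mem (mem_adjoin_simple_self _ _) p))

theorem mem_sepCl_of_forall_mem_sup_pfield (s : Finset K) {L : Subfield K}
    (hs : L ⊔ Subfield.closure s = ⊤) {x : K} (hx : ∀ n, x ∈ L ⊔ pfield K p n) :
    x ∈ sepCl L := by
  obtain ⟨m, hm⟩ := (isAlgebraic_of_forall_mem_sup_pfield s hs hx).exists_isSeparable_pow_pow p
  have hL := IntermediateField.le_toSubfield (separableClosure L K)
  exact mem_of_pow_pow_mem_of_forall_mem_sup_pfield s (top_unique (hs ▸ sup_le_sup_right hL _)) m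
    (mem_sepCl_iff.2 hm) fun n => sup_le_sup_right hL _ (hx n)

lemma sepCl_le_sup_pfield (L : Subfield K) (n : ℕ) : sepCl L ≤ L ⊔ pfield K p n := by
  intro x hx
  have h := adjoin_simple_eq_adjoin_pow_expChar_pow_of_isSeparable L K (mem_sepCl_iff.1 hx) p n
  have hx' : x ∈ (L⟮x ^ p ^ n⟯).toSubfield := h ▸ mem_adjoin_simple_self L x
  rw [toSubfield_adjoin_eq_sup_closure] at hx'
  exact sup_le_sup_left (Subfield.closure_le.2 (Set.singleton_subset_iff.2 (pow_mem_pfield n x)))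
    L hx'

theorem iInf_sup_pfield_eq_sepCl (s : Finset K) (hs : kfield K p ⊔ Subfield.closure s = ⊤)
    (W : Subfield K) : (⨅ n : ℕ, W ⊔ pfield K p n) = sepCl (kfield K p ⊔ W) := by
  have hW (n : ℕ) : kfield K p ⊔ W ⊔ pfield K p n = W ⊔ pfield K p n := by
    rw [sup_comm (kfield K p), sup_assoc, sup_eq_right.2 (kfield_le_pfield n)]
  refine le_antisymm (fun x hx => ?_) (le_iInf fun n => hW n ▸ sepCl_le_sup_pfield _ n)
  exact mem_sepCl_of_forall_mem_sup_pfield s (top_unique (hs ▸ sup_le_sup_right le_sup_left _))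
    fun n => hW n ▸ Subfield.mem_iInf.1 hx n

end

/-- for any subfield `W ⊆ K`, the field of first integrals
`W_∞ = ⋂_n (W · K^{p^n})` equals the separable closure of `k·W` in `K`; in particular
`W ↦ ⋂_n (W · K^{p^n})` is the identity on subfields containing `k` that are separably
closed in `K`. -/
theorem stmt11 {K : Type*} [Field K] (p : ℕ) [Fact p.Prime] [CharP K p]
    (hfg : ∃ s : Finset K, IntermediateField.adjoin ↥(kfield K p) (s : Set K) = ⊤)
    (W : Subfield K) :
    (⨅ n : ℕ, W ⊔ pfield K p n) = sepCl (kfield K p ⊔ W) ∧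
    ∀ V : Subfield K, kfield K p ≤ V → sepCl V = V →
      (⨅ n : ℕ, V ⊔ pfield K p n) = V := by
  obtain ⟨s, hs⟩ := hfg
  have hgen : kfield K p ⊔ Subfield.closure s = ⊤ := by
    rw [← toSubfield_adjoin_eq_sup_closure, hs]
    rfl
  refine ⟨iInf_sup_pfield_eq_sepCl s hgen W, fun V hkV hV => ?_⟩
  rw [iInf_sup_pfield_eq_sepCl s hgen V, sup_eq_right.2 hkV, hV]
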